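/- Let H be a complex Hilbert space and let T ∈ B(H) be hyponormal. Then ker(I − T) reduces T, and the power sequence {T^n} is weakly convergent if and only if ⟨T^n x, y⟩ → 0 as n → ∞ for every x ∈ ker(I − T)^⊥ and every y ∈ H; if this is the case, then the weak limit of {T^n} is the orthogonal projection of H onto ker(I − T) and ker(I − T) = ker(I − T*). -/

import Mathlib

/-!
Hyponormality gives `‖T* x‖ ≤ ‖T x‖`, so a fixed vector `x` of `T` satisfies
`‖T* x - x‖² = ‖T* x‖² - ‖x‖² ≤ 0`: hence `ker (I - T) ⊆ ker (I - T*)`, and this subspace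
reduces `T`. If `T^n → A` weakly, then `A` maps into `ker (I - T)`, and for `w ∈ ker (I - T*)`
`⟪A x, w⟫ = lim ⟪x, T*^n w⟫ = ⟪x, w⟫`; by the inclusion above this characterises `A` as the
orthogonal projection `P` onto `ker (I - T)`. Conversely, splitting `x = P x + (x - P x)` shows
that `T^n → P` weakly as soon as the powers tend weakly to `0` on `ker (I - T)ᗮ`. Finally
`ker (I - T*) ⊆ ker (I - T)`, because `P = P*` fixes every fixed vector of `T*`.
-/

open Filter Topology

section

open ContinuousLinearMap

variable {𝕜 E : Type*} [RCLike 𝕜] [NormedAddCommGroup E] [InnerProductSpace 𝕜 E]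

local notation "⟪" x ", " y "⟫" => inner 𝕜 x y

def HasWeakPowerLimit (T A : E →L[𝕜] E) : Prop :=
  ∀ x y : E, Tendsto (fun n : ℕ => ⟪(T ^ n) x, y⟫) atTop (𝓝 ⟪A x, y⟫)

lemma mem_ker_one_sub_iff {T : E →L[𝕜] E} {x : E} :
    x ∈ LinearMap.ker ((1 - T : E →L[𝕜] E) : E →ₗ[𝕜] E) ↔ T x = x := by
  rw [LinearMap.mem_ker, coe_coe, sub_apply, one_apply_eq_self, sub_eq_zero, eq_comm]

lemma pow_apply_of_apply_eq {T : E →L[𝕜] E} {x : E} (hx : T x = x) (n : ℕ) :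
    (T ^ n) x = x := by
  induction n with
  | zero => rfl
  | succ n ih => rw [pow_succ, mul_apply_eq_comp, hx, ih]

lemma hasWeakPowerLimit_starProjection {T : E →L[𝕜] E} {M : Submodule 𝕜 E}
    [M.HasOrthogonalProjection] (hM : ∀ x ∈ M, T x = x)
    (h : ∀ x ∈ Mᗮ, ∀ y : E, Tendsto (fun n : ℕ => ⟪(T ^ n) x, y⟫) atTop (𝓝 0)) :
    HasWeakPowerLimit T M.starProjection := by
  intro x y
  have hsplit : ∀ n : ℕ, ⟪(T ^ n) x, y⟫ =
      ⟪M.starProjection x, y⟫ + ⟪(T ^ n) (x - M.starProjection x), y⟫ := fun n => by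
    rw [map_sub, pow_apply_of_apply_eq (hM _ (M.starProjection_apply_mem x)), inner_sub_left,
      add_sub_cancel]
  simp_rw [hsplit]
  simpa only [add_zero] using
    tendsto_const_nhds.add (h _ (M.sub_starProjection_mem_orthogonal x) y)

variable [CompleteSpace E] {T : E →L[𝕜] E}

lemma inner_pow_apply_of_adjoint_apply_eq {z : E} (hz : adjoint T z = z) (x : E) (n : ℕ) :
    ⟪(T ^ n) x, z⟫ = ⟪x, z⟫ := by
  induction n with
  | zero => rfl
  | succ n ih => rw [pow_succ', mul_apply_eq_comp, ← adjoint_inner_right, hz, ih]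

def IsHyponormal (T : E →L[𝕜] E) : Prop :=
  (adjoint T ∘L T - T ∘L adjoint T).IsPositive

lemma IsHyponormal.norm_adjoint_apply_le (hT : IsHyponormal T) (x : E) :
    ‖adjoint T x‖ ≤ ‖T x‖ := by
  have h := hT.re_inner_nonneg_left x
  rw [sub_apply, comp_apply, comp_apply, inner_sub_left, adjoint_inner_left,
    ← adjoint_inner_right T (adjoint T x) x, map_sub, inner_self_eq_norm_sq,
    inner_self_eq_norm_sq, sub_nonneg] at h
  exact (pow_le_pow_iff_left₀ (norm_nonneg _) (norm_nonneg _) two_ne_zero).mp h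

lemma adjoint_apply_eq_of_apply_eq {x : E} (hx : T x = x) (hle : ‖adjoint T x‖ ≤ ‖x‖) :
    adjoint T x = x := by
  have hre : RCLike.re ⟪adjoint T x, x⟫ = ‖x‖ ^ 2 := by
    rw [adjoint_inner_left, hx, inner_self_eq_norm_sq]
  have hsq : ‖adjoint T x - x‖ ^ 2 ≤ 0 := by
    rw [@norm_sub_sq 𝕜, hre]
    nlinarith [norm_nonneg (adjoint T x), norm_nonneg x]
  rw [← sub_eq_zero, ← norm_le_zero_iff]
  nlinarith [norm_nonneg (adjoint T x - x)]

lemma IsHyponormal.ker_one_sub_le (hT : IsHyponormal T) :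
    LinearMap.ker ((1 - T : E →L[𝕜] E) : E →ₗ[𝕜] E) ≤
      LinearMap.ker ((1 - adjoint T : E →L[𝕜] E) : E →ₗ[𝕜] E) := fun x hx => by
  rw [mem_ker_one_sub_iff] at hx ⊢
  exact adjoint_apply_eq_of_apply_eq hx (by simpa [hx] using hT.norm_adjoint_apply_le x)

namespace HasWeakPowerLimit

variable {A : E →L[𝕜] E}

lemma apply_map_apply_eq (hA : HasWeakPowerLimit T A) (x : E) : T (A x) = A x := by
  refine ext_inner_right 𝕜 fun y => ?_
  have hshift : ∀ n : ℕ, ⟪(T ^ (n + 1)) x, y⟫ = ⟪(T ^ n) x, adjoint T y⟫ := fun n => by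
    rw [pow_succ', mul_apply_eq_comp, adjoint_inner_right]
  have h := (hA x y).comp (tendsto_add_atTop_nat 1)
  simp only [Function.comp_def, hshift] at h
  rw [← adjoint_inner_right]
  exact tendsto_nhds_unique (hA x (adjoint T y)) h

lemma inner_map_apply_of_adjoint_apply_eq (hA : HasWeakPowerLimit T A) (x : E) {z : E}
    (hz : adjoint T z = z) : ⟪A x, z⟫ = ⟪x, z⟫ :=
  tendsto_nhds_unique (hA x z) <| by
    simp only [inner_pow_apply_of_adjoint_apply_eq hz, tendsto_const_nhds]

lemma adjoint_apply_of_adjoint_apply_eq (hA : HasWeakPowerLimit T A) {z : E}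
    (hz : adjoint T z = z) : adjoint A z = z :=
  ext_inner_left 𝕜 fun x => by
    rw [adjoint_inner_right, hA.inner_map_apply_of_adjoint_apply_eq x hz]

lemma eq_starProjection (hA : HasWeakPowerLimit T A)
    (hfix : LinearMap.ker ((1 - T : E →L[𝕜] E) : E →ₗ[𝕜] E) ≤
      LinearMap.ker ((1 - adjoint T : E →L[𝕜] E) : E →ₗ[𝕜] E)) :
    A = (LinearMap.ker ((1 - T : E →L[𝕜] E) : E →ₗ[𝕜] E)).starProjection := by
  ext x
  refine (Submodule.eq_starProjection_of_mem_of_inner_eq_zero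
    (mem_ker_one_sub_iff.mpr (hA.apply_map_apply_eq x)) fun w hw => ?_).symm
  rw [inner_sub_left,
    hA.inner_map_apply_of_adjoint_apply_eq x (mem_ker_one_sub_iff.mp (hfix hw)), sub_self]

end HasWeakPowerLimit

end

/-- Let `T` be hyponormal (i.e. `T*T - TT*` is positive). Then `ker (I - T)` reduces
`T`, and `{T^n}` is weakly convergent iff `⟨T^n x, y⟩ → 0` for all `x ∈ ker (I - T)ᗮ`
and `y ∈ H`; in that case the weak limit is the orthogonal projection of `H` onto
`ker (I - T)` and `ker (I - T) = ker (I - T*)`. -/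
theorem stmt11 {H : Type*} [NormedAddCommGroup H] [InnerProductSpace ℂ H] [CompleteSpace H]
    (T : H →L[ℂ] H)
    (hhypo : (ContinuousLinearMap.adjoint T ∘L T - T ∘L ContinuousLinearMap.adjoint T).IsPositive) :
    ((∀ x ∈ LinearMap.ker ((1 - T : H →L[ℂ] H) : H →ₗ[ℂ] H), T x ∈ LinearMap.ker ((1 - T : H →L[ℂ] H) : H →ₗ[ℂ] H)) ∧
      (∀ x ∈ LinearMap.ker ((1 - T : H →L[ℂ] H) : H →ₗ[ℂ] H),
        ContinuousLinearMap.adjoint T x ∈ LinearMap.ker ((1 - T : H →L[ℂ] H) : H →ₗ[ℂ] H))) ∧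
    ((∃ A : H →L[ℂ] H, ∀ x y : H,
        Tendsto (fun n : ℕ => (inner ℂ ((T ^ n) x) y : ℂ)) atTop (𝓝 (inner ℂ (A x) y)))
      ↔ (∀ x ∈ (LinearMap.ker ((1 - T : H →L[ℂ] H) : H →ₗ[ℂ] H))ᗮ, ∀ y : H,
          Tendsto (fun n : ℕ => (inner ℂ ((T ^ n) x) y : ℂ)) atTop (𝓝 (0 : ℂ)))) ∧
    (∀ P : H →L[ℂ] H,
      (∀ x y : H,
        Tendsto (fun n : ℕ => (inner ℂ ((T ^ n) x) y : ℂ)) atTop (𝓝 (inner ℂ (P x) y))) →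
      (P ∘L P = P ∧ ContinuousLinearMap.adjoint P = P ∧
        LinearMap.range (P : H →ₗ[ℂ] H) = LinearMap.ker ((1 - T : H →L[ℂ] H) : H →ₗ[ℂ] H) ∧
        LinearMap.ker ((1 - T : H →L[ℂ] H) : H →ₗ[ℂ] H) = LinearMap.ker ((1 - ContinuousLinearMap.adjoint T : H →L[ℂ] H) : H →ₗ[ℂ] H))) := by
  have hT : IsHyponormal T := hhypo
  set M := LinearMap.ker ((1 - T : H →L[ℂ] H) : H →ₗ[ℂ] H)
  have hM : ∀ x ∈ M, T x = x := fun x => mem_ker_one_sub_iff.mp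
  have hlim : ∀ {A : H →L[ℂ] H}, HasWeakPowerLimit T A → A = M.starProjection :=
    fun hA => hA.eq_starProjection hT.ker_one_sub_le
  refine ⟨⟨fun x hx => by rwa [hM x hx], fun x hx => by
      rwa [mem_ker_one_sub_iff.mp (hT.ker_one_sub_le hx)]⟩,
    ⟨fun ⟨A, hA⟩ x hx y => ?_,
      fun h => ⟨M.starProjection, hasWeakPowerLimit_starProjection hM h⟩⟩,
    fun P hP => ?_⟩
  · simpa only [hlim hA, M.starProjection_apply_eq_zero_iff.mpr hx, inner_zero_left] using hA x y
  · obtain rfl := hlim hP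
    have hPadj := (isSelfAdjoint_starProjection M).adjoint_eq
    refine ⟨M.isIdempotentElem_starProjection, hPadj, M.range_starProjection,
      le_antisymm hT.ker_one_sub_le fun z hz => ?_⟩
    rw [← M.starProjection_eq_self_iff, ← hPadj]
    exact HasWeakPowerLimit.adjoint_apply_of_adjoint_apply_eq hP (mem_ker_one_sub_iff.mp hz)
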